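/- For every non-negative integer n, writing d = 2^n, the matrix A_n satisfies |det A_n| = (2d)^{d/2} / √2. In particular A_n is invertible. -/

import Mathlib

/-- σ(n,k) from the paper: σ(0,1)=1 and, with d = 2^n, σ(n+1,k)=σ(n,k) for 1 ≤ k ≤ d,
σ(n+1,k)=2d+1−σ(n,k−d) for d+1 ≤ k ≤ 2d. -/
def sigmaCF : ℕ → ℕ → ℤ
  | 0, _ => 1
  | n + 1, k => if k ≤ 2 ^ n then sigmaCF n k else 2 * 2 ^ n + 1 - sigmaCF n (k - 2 ^ n)

/-- ξ_{n,k} = 2 cos(π(2σ(n,k) − 1)/2^{n+1}). -/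
noncomputable def xiCF (n k : ℕ) : ℝ :=
  2 * Real.cos (Real.pi * (2 * (sigmaCF n k : ℝ) - 1) / 2 ^ (n + 1))

/-- D_n = diag(ξ_{n+1,1}, …, ξ_{n+1,2^n}). -/
noncomputable def DCF (n : ℕ) : Matrix (Fin (2 ^ n)) (Fin (2 ^ n)) ℝ :=
  Matrix.diagonal fun i => xiCF (n + 1) (i.val + 1)

/-- A_0 = (1), A_{n+1} = [[A_n, D_n A_n], [A_n, −D_n A_n]]. -/
noncomputable def ACF : (n : ℕ) → Matrix (Fin (2 ^ n)) (Fin (2 ^ n)) ℝ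
  | 0 => 1
  | n + 1 =>
    Matrix.reindex (finSumFinEquiv.trans (finCongr (by rw [pow_succ, mul_two])))
      (finSumFinEquiv.trans (finCongr (by rw [pow_succ, mul_two])))
      (Matrix.fromBlocks (ACF n) (DCF n * ACF n) (ACF n) (-(DCF n * ACF n)))

/-!
Factoring `A_{n+1} = [[1, D_n], [1, -D_n]] · diag(A_n, A_n)` and taking the Schur complement
gives `det A_{n+1} = (-2)^d · det D_n · (det A_n)^2`, so everything reduces to `det D_n = √2`.
Writing `ξ_{n,k} = 2 cos θ_{n,k}`, the recursion for `σ` says that `θ_{n+1,k} = θ_{n,k}/2` for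
`k ≤ d` and `θ_{n+1,d+k} = π - θ_{n,k}/2`. Pairing the factors `k` and `d + k` and using
`2 cos(x/2) · 2 cos(π/2 - x/2) = 2 sin(x/2) · 2 sin(π/2 - x/2) = 2 sin x`, the products
of `2 cos(θ_{n,k}/2)` and of `2 sin(θ_{n,k}/2)` over `1 ≤ k ≤ 2^n` both reduce to
`2 sin(π/4) = √2`.
-/

open Finset Real Matrix

lemma sin_two_mul_half (x : ℝ) : 2 * sin (x / 2) * cos (x / 2) = sin x := by
  rw [← sin_two_mul, mul_div_cancel₀ x two_ne_zero]

lemma two_cos_half_mul_two_cos_pi_div_two_sub_half (x : ℝ) :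
    2 * cos (x / 2) * (2 * cos (π / 2 - x / 2)) = 2 * sin x := by
  rw [cos_pi_div_two_sub, ← sin_two_mul_half x]
  ring

lemma two_sin_half_mul_two_sin_pi_div_two_sub_half (x : ℝ) :
    2 * sin (x / 2) * (2 * sin (π / 2 - x / 2)) = 2 * sin x := by
  rw [sin_pi_div_two_sub, ← sin_two_mul_half x]
  ring

lemma det_fromBlocks_mul_neg_mul {m R : Type*} [Fintype m] [DecidableEq m] [CommRing R]
    (A D : Matrix m m R) :
    (fromBlocks A (D * A) A (-(D * A))).det = (-2) ^ Fintype.card m * D.det * A.det ^ 2 := by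
  have hfactor :
      fromBlocks A (D * A) A (-(D * A)) = fromBlocks 1 D 1 (-D) * fromBlocks A 0 0 A := by
    simp [fromBlocks_multiply]
  have hschur : -D - 1 * D = (-2 : R) • D := by
    rw [Matrix.one_mul, ← neg_add', ← two_smul R D, neg_smul]
  rw [hfactor, det_mul, det_fromBlocks_one₁₁, det_fromBlocks_zero₂₁, hschur, det_smul]
  ring

noncomputable def thetaCF (n k : ℕ) : ℝ := π * (2 * (sigmaCF n k : ℝ) - 1) / 2 ^ (n + 1)

lemma xiCF_eq_two_mul_cos_thetaCF (n k : ℕ) : xiCF n k = 2 * cos (thetaCF n k) := rfl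

lemma thetaCF_succ_of_le {n k : ℕ} (hk : k ≤ 2 ^ n) : thetaCF (n + 1) k = thetaCF n k / 2 := by
  rw [thetaCF, thetaCF, sigmaCF, if_pos hk]
  field_simp
  ring

lemma thetaCF_succ_two_pow_add {n k : ℕ} (hk : 0 < k) :
    thetaCF (n + 1) (2 ^ n + k) = π - thetaCF n k / 2 := by
  rw [thetaCF, thetaCF, sigmaCF, if_neg (by omega), Nat.add_sub_cancel_left]
  push_cast
  field_simp
  ring

lemma prod_half_thetaCF_succ (f : ℝ → ℝ) (n : ℕ) :
    ∏ i ∈ range (2 ^ (n + 1)), f (thetaCF (n + 1) (i + 1) / 2) =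
      ∏ i ∈ range (2 ^ n),
        f (thetaCF n (i + 1) / 2 / 2) * f (π / 2 - thetaCF n (i + 1) / 2 / 2) := by
  rw [pow_succ, mul_two, prod_range_add, ← prod_mul_distrib]
  refine prod_congr rfl fun i hi => ?_
  rw [thetaCF_succ_of_le (by simpa using mem_range.mp hi), add_assoc,
    thetaCF_succ_two_pow_add i.succ_pos]
  congr 2
  ring

lemma prod_two_sin_half_thetaCF (n : ℕ) :
    ∏ i ∈ range (2 ^ n), 2 * sin (thetaCF n (i + 1) / 2) = √2 := by
  induction n with
  | zero =>
    simp [thetaCF, sigmaCF, show π * (2 - 1) / 2 / 2 = π / 4 by ring, sin_pi_div_four]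
    ring
  | succ n ih =>
    rw [prod_half_thetaCF_succ (fun x => 2 * sin x), ← ih]
    exact prod_congr rfl fun i _ => two_sin_half_mul_two_sin_pi_div_two_sub_half _

lemma prod_two_cos_half_thetaCF (n : ℕ) :
    ∏ i ∈ range (2 ^ n), 2 * cos (thetaCF n (i + 1) / 2) = √2 := by
  cases n with
  | zero =>
    simp [thetaCF, sigmaCF, show π * (2 - 1) / 2 / 2 = π / 4 by ring, cos_pi_div_four]
    ring
  | succ n =>
    rw [prod_half_thetaCF_succ (fun x => 2 * cos x), ← prod_two_sin_half_thetaCF n]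
    exact prod_congr rfl fun i _ => two_cos_half_mul_two_cos_pi_div_two_sub_half _

lemma det_DCF (n : ℕ) : (DCF n).det = √2 := by
  rw [DCF, det_diagonal, Fin.prod_univ_eq_prod_range (fun i => xiCF (n + 1) (i + 1)),
    ← prod_two_cos_half_thetaCF n]
  refine prod_congr rfl fun i hi => ?_
  rw [xiCF_eq_two_mul_cos_thetaCF, thetaCF_succ_of_le (by simpa using mem_range.mp hi)]

lemma det_ACF_succ (n : ℕ) :
    (ACF (n + 1)).det = (-2) ^ 2 ^ n * (DCF n).det * (ACF n).det ^ 2 := by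
  rw [ACF, det_reindex_self, det_fromBlocks_mul_neg_mul, Fintype.card_fin]

lemma det_ACF_sq (n : ℕ) : (ACF n).det ^ 2 = 2 ^ ((n + 1) * 2 ^ n) / 2 := by
  induction n with
  | zero => norm_num [ACF]
  | succ n ih =>
    have hsign : ((-2 : ℝ) ^ 2 ^ n) ^ 2 = 2 ^ 2 ^ n * 2 ^ 2 ^ n := by
      rw [← mul_pow, ← pow_mul, mul_comm, pow_mul]
      norm_num
    calc (ACF (n + 1)).det ^ 2
        = ((-2) ^ 2 ^ n) ^ 2 * √2 ^ 2 * ((ACF n).det ^ 2) ^ 2 := by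
          rw [det_ACF_succ, det_DCF]; ring
      _ = 2 ^ (2 ^ n + 2 ^ n + (n + 1) * 2 ^ n + (n + 1) * 2 ^ n) / 2 := by
          rw [ih, sq_sqrt zero_le_two, hsign, pow_add, pow_add, pow_add]; ring
      _ = 2 ^ ((n + 1 + 1) * 2 ^ (n + 1)) / 2 := by congr 2; ring

/-- For every non-negative integer `n`, writing `d = 2^n`, the matrix `A_n` satisfies
`|det A_n| = (2d)^{d/2} / √2`; in particular `A_n` is invertible. -/
theorem abs_det_ACF (n : ℕ) :
    |(ACF n).det| = (2 * 2 ^ n : ℝ) ^ (((2 : ℝ) ^ n) / 2) / Real.sqrt 2 ∧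
      IsUnit (ACF n).det := by
  have hsq := det_ACF_sq n
  refine ⟨?_, ?_⟩
  · rw [← sqrt_sq_eq_abs, hsq, sqrt_div' _ zero_le_two, sqrt_eq_rpow, ← pow_succ',
      ← rpow_natCast, ← rpow_natCast, ← rpow_mul zero_le_two, ← rpow_mul zero_le_two]
    push_cast
    ring_nf
  · have hpos : 0 < (ACF n).det ^ 2 := by rw [hsq]; positivity
    exact isUnit_iff_ne_zero.mpr fun h0 => by simp [h0] at hpos
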